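/- arXiv:2210.17090 — 5 statements merged into one kernel-verified Lean document; each statement's English description precedes it below -/
import Mathlib

section
/- Let X be a finite simple graph all of whose odd cycles have length at least 2k+1 (k ≥ 1). Then for every vertex x, the subgraph of X induced on the metric ball B(x, k−1) contains no odd cycle (equivalently, it is bipartite: it admits a proper 2-coloring). -/
/-!
Colour the ball `B(x, k-1)` by the parity of the distance to `x`. If two adjacent vertices `u`, `v`
of the ball received the same colour, shortest paths from `x` to `u` and to `v` together with the
edge `uv` would form a closed walk of odd length at most `2k - 1`, and every odd closed walk
contains an odd cycle no longer than itself. A graph with a proper 2-colouring has no odd closed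
walk at all.
-/

namespace SimpleGraph.Walk

variable {V : Type*} {G : SimpleGraph V}

theorem exists_odd_isCycle_or_exists_isPath {u v : V} (p : G.Walk u v) :
    (∃ (w : V) (c : G.Walk w w), c.IsCycle ∧ Odd c.length ∧ c.length ≤ p.length) ∨
      ∃ q : G.Walk u v, q.IsPath ∧ q.length ≤ p.length ∧ q.length % 2 = p.length % 2 := by
  classical
  induction p with
  | nil => exact .inr ⟨nil, .nil, le_rfl, rfl⟩
  | @cons u a v hua p ih =>
    rcases ih with ⟨w, c, hc, hodd, hle⟩ | ⟨q, hq, hle, hpar⟩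
    · exact .inl ⟨w, c, hc, hodd, by rw [length_cons]; omega⟩
    by_cases hu : u ∈ q.support
    · -- the part of `q` before `u` closes up with the edge `ua`; if that closed walk is even,
      -- dropping it keeps the parity
      have hsplit := congrArg length (q.take_spec hu)
      rw [length_append] at hsplit
      by_cases hprefix : Even (q.takeUntil u hu).length
      · have hprefix_ne : (q.takeUntil u hu).length ≠ 0 := fun h =>
          hua.ne (eq_of_length_eq_zero h).symm
        refine .inl ⟨u, cons hua (q.takeUntil u hu), ?_, ?_, ?_⟩
        · rw [isCycle_iff_isPath_tail_and_le_length]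
          simp only [tail_cons, length_cons]
          refine ⟨(isPath_copy ..).mpr (hq.takeUntil hu), ?_⟩
          obtain ⟨r, hr⟩ := hprefix
          omega
        · simpa [length_cons] using hprefix.add_one
        · rw [length_cons, length_cons]; omega
      · refine .inr ⟨q.dropUntil u hu, hq.dropUntil hu, by rw [length_cons]; omega, ?_⟩
        rw [Nat.not_even_iff_odd, Nat.odd_iff] at hprefix
        rw [length_cons]; omega
    · exact .inr ⟨cons hua q, hq.cons hu, by simp only [length_cons]; omega,
        by simp only [length_cons]; omega⟩

theorem exists_odd_isCycle_of_odd_length {u : V} (p : G.Walk u u) (hp : Odd p.length) :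
    ∃ (w : V) (c : G.Walk w w), c.IsCycle ∧ Odd c.length ∧ c.length ≤ p.length := by
  refine p.exists_odd_isCycle_or_exists_isPath.resolve_right ?_
  rintro ⟨q, hq, -, hpar⟩
  rw [length_eq_zero_iff.mpr (isPath_iff_nil.mp hq)] at hpar
  rw [Nat.odd_iff] at hp
  omega

end SimpleGraph.Walk

namespace SimpleGraph

variable {V : Type*} {G : SimpleGraph V}

theorem exists_odd_isCycle_of_adj_of_dist_mod_two_eq {x u v : V} (hu : G.Reachable x u)
    (hv : G.Reachable x v) (huv : G.Adj u v) (hpar : G.dist x u % 2 = G.dist x v % 2) :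
    ∃ (w : V) (c : G.Walk w w), c.IsCycle ∧ Odd c.length ∧
      c.length ≤ G.dist x u + G.dist x v + 1 := by
  obtain ⟨pu, hpu⟩ := hu.exists_walk_length_eq_dist
  obtain ⟨pv, hpv⟩ := hv.exists_walk_length_eq_dist
  have hlen : (pu.append (.cons huv pv.reverse)).length = G.dist x u + G.dist x v + 1 := by
    simp only [Walk.length_append, Walk.length_cons, Walk.length_reverse, hpu, hpv]
    omega
  rw [← hlen]
  exact Walk.exists_odd_isCycle_of_odd_length _ (by rw [hlen, Nat.odd_iff]; omega)

theorem colorable_two_induce_of_exists_walk_length_lt {k : ℕ}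
    (hodd : ∀ (v : V) (w : G.Walk v v), w.IsCycle → Odd w.length → 2 * k + 1 ≤ w.length)
    (x : V) {S : Set V} (hS : ∀ y ∈ S, ∃ p : G.Walk x y, p.length < k) :
    (G.induce S).Colorable 2 := by
  have hdist : ∀ y ∈ S, G.Reachable x y ∧ G.dist x y < k := fun y hy =>
    let ⟨p, hp⟩ := hS y hy
    ⟨⟨p⟩, (dist_le p).trans_lt hp⟩
  let C : (G.induce S).Coloring (ZMod 2) := Coloring.mk (fun y => (G.dist x y : ZMod 2)) <| by
    rintro ⟨u, hu⟩ ⟨v, hv⟩ huv hpar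
    obtain ⟨w, c, hc, hc_odd, hc_len⟩ := exists_odd_isCycle_of_adj_of_dist_mod_two_eq
      (hdist u hu).1 (hdist v hv).1 huv ((ZMod.natCast_eq_natCast_iff' _ _ _).mp hpar)
    have := hodd w c hc hc_odd
    have := (hdist u hu).2
    have := (hdist v hv).2
    omega
  simpa using C.colorable

end SimpleGraph

theorem ball_no_odd_cycle_general {V : Type*} (X : SimpleGraph V) (k : ℕ) (hk : 1 ≤ k)
    (hodd : ∀ (v : V) (w : X.Walk v v), w.IsCycle → Odd w.length → 2 * k + 1 ≤ w.length) :
    ∀ x : V,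
      (∀ (v : ({y : V | ∃ w : X.Walk x y, w.length ≤ k - 1} : Set V))
          (w : (X.induce {y : V | ∃ w : X.Walk x y, w.length ≤ k - 1}).Walk v v),
          w.IsCycle → ¬ Odd w.length) ∧
      (X.induce {y : V | ∃ w : X.Walk x y, w.length ≤ k - 1}).Colorable 2 := by
  intro x
  have hcol := X.colorable_two_induce_of_exists_walk_length_lt hodd x
    (S := {y : V | ∃ w : X.Walk x y, w.length ≤ k - 1})
    fun y ⟨p, hp⟩ => ⟨p, by omega⟩
  refine ⟨fun v w _ hw => ?_, hcol⟩
  exact absurd ((w.three_le_chromaticNumber_of_odd_loop hw).trans hcol.chromaticNumber_le)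
    (by norm_num)

/-- **Lemma (balls of radius k−1 are bipartite).** In a finite simple graph all of whose odd
cycles have length at least `2k+1` (`k ≥ 1`), the subgraph induced on any metric ball of
radius `k-1` contains no odd cycle; equivalently, it admits a proper 2-coloring. -/
theorem ball_no_odd_cycle {V : Type*} [Fintype V] (X : SimpleGraph V) (k : ℕ) (hk : 1 ≤ k)
    (hodd : ∀ (v : V) (w : X.Walk v v), w.IsCycle → Odd w.length → 2 * k + 1 ≤ w.length) :
    ∀ x : V,
      (∀ (v : ({y : V | ∃ w : X.Walk x y, w.length ≤ k - 1} : Set V))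
          (w : (X.induce {y : V | ∃ w : X.Walk x y, w.length ≤ k - 1}).Walk v v),
          w.IsCycle → ¬ Odd w.length) ∧
      (X.induce {y : V | ∃ w : X.Walk x y, w.length ≤ k - 1}).Colorable 2 :=
  ball_no_odd_cycle_general X k hk hodd
end

section
/- Let X be a finite simple graph all of whose odd cycles have length at least 2k+1 (k ≥ 1), let x be a vertex of X, and let m ≥ 2. If the subgraph of X induced on the complement V(X) ∖ B(x, k−1) admits a proper coloring in m−1 colors, then X admits a proper coloring in m colors. -/
/-!
Two vertices of `B = B(x, k - 1)` at distances of equal parity from `x` cannot be adjacent: the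
edge would close a walk of odd length at most `2k - 1` through `x`, and a shortest odd closed walk
is an odd cycle. So the vertices of `B` whose distance has the parity of `k - 1`, among them every
vertex of `B` with a neighbour outside `B`, form an independent set, which takes the new color.
The other vertices of `B` have all their neighbours in that set, so they may reuse an old color.
-/

namespace SimpleGraph

variable {V : Type*} {G : SimpleGraph V}

namespace Walk

theorem exists_split_of_not_isPath [DecidableEq V] {a b : V} (p : G.Walk a b) (hp : ¬p.IsPath) :
    ∃ (y : V) (c : G.Walk y y) (q : G.Walk a b), 0 < c.length ∧ c.length + q.length = p.length := by
  induction p with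
  | nil => exact absurd IsPath.nil hp
  | @cons a w b h p ih =>
    by_cases ha : a ∈ p.support
    · refine ⟨a, cons h (p.takeUntil a ha), p.dropUntil a ha, by simp, ?_⟩
      have hsplit := congrArg length (p.take_spec ha)
      rw [length_append] at hsplit
      simp only [length_cons]
      omega
    · obtain ⟨y, c, q, hc, hlen⟩ := ih fun hpath => hp (hpath.cons ha)
      exact ⟨y, c, cons h q, hc, by simp only [length_cons]; omega⟩

theorem exists_isCycle_odd_length_le {u : V} (w : G.Walk u u) (hw : Odd w.length) :
    ∃ (v : V) (c : G.Walk v v), c.IsCycle ∧ Odd c.length ∧ c.length ≤ w.length := by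
  classical
  induction hn : w.length using Nat.strong_induction_on generalizing u with
  | _ n ih =>
  cases w with
  | nil => simp at hw
  | cons h p =>
    rw [length_cons] at hw hn
    by_cases hp : p.IsPath
    · have hp0 : p.length ≠ 0 := fun h0 => h.ne (eq_of_length_eq_zero h0).symm
      have hcyc : (cons h p).IsCycle :=
        isCycle_iff_isPath_tail_and_le_length.mpr ⟨by simpa using hp, by
          rw [length_cons]; rcases hw with ⟨j, hj⟩; omega⟩
      exact ⟨u, cons h p, hcyc, by simpa using hw, by simp [hn]⟩
    · obtain ⟨y, c, q, hc, hlen⟩ := p.exists_split_of_not_isPath hp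
      rcases Nat.even_or_odd c.length with hce | hco
      · have hq : Odd (cons h q).length := by
          rw [← hlen, Nat.odd_iff] at hw
          rw [Nat.even_iff] at hce
          rw [length_cons, Nat.odd_iff]
          omega
        obtain ⟨v, d, hd, hdo, hle⟩ := ih _ (by simp only [length_cons]; omega) (cons h q) hq rfl
        exact ⟨v, d, hd, hdo, by simp only [length_cons] at hle; omega⟩
      · obtain ⟨v, d, hd, hdo, hle⟩ := ih _ (by omega) c hco rfl
        exact ⟨v, d, hd, hdo, by omega⟩

end Walk

def closedBall (G : SimpleGraph V) (x : V) (r : ℕ) : Set V :=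
  {y | ∃ w : G.Walk x y, w.length ≤ r}

section closedBall

variable {x u v : V} {r : ℕ}

theorem mem_closedBall_iff : v ∈ G.closedBall x r ↔ G.Reachable x v ∧ G.dist x v ≤ r :=
  ⟨fun ⟨w, hw⟩ => ⟨⟨w⟩, (G.dist_le w).trans hw⟩, fun ⟨hr, hd⟩ =>
    let ⟨w, hw⟩ := hr.exists_walk_length_eq_dist; ⟨w, hw ▸ hd⟩⟩

theorem dist_eq_of_adj_of_mem_closedBall_of_notMem (hu : u ∈ G.closedBall x r)
    (hv : v ∉ G.closedBall x r) (huv : G.Adj u v) : G.dist x u = r := by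
  obtain ⟨hxu, hdu⟩ := mem_closedBall_iff.1 hu
  have := huv.reachable.dist_triangle_right x
  have := G.dist_eq_one_iff_adj.2 huv
  by_contra hne
  exact hv (mem_closedBall_iff.2 ⟨hxu.trans huv.reachable, by omega⟩)

theorem dist_mod_two_ne_of_adj_of_mem_closedBall {n : ℕ}
    (hcyc : ∀ (y : V) (c : G.Walk y y), c.IsCycle → Odd c.length → n ≤ c.length)
    (hrn : 2 * r + 1 < n) (hu : u ∈ G.closedBall x r) (hv : v ∈ G.closedBall x r)
    (huv : G.Adj u v) : G.dist x u % 2 ≠ G.dist x v % 2 := by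
  intro hpar
  obtain ⟨hxu, hdu⟩ := mem_closedBall_iff.1 hu
  obtain ⟨hxv, hdv⟩ := mem_closedBall_iff.1 hv
  obtain ⟨p, hp⟩ := hxu.exists_walk_length_eq_dist
  obtain ⟨q, hq⟩ := hxv.exists_walk_length_eq_dist
  set w := p.append (.cons huv q.reverse)
  have hw : w.length = G.dist x u + G.dist x v + 1 := by
    simp only [w, Walk.length_append, Walk.length_cons, Walk.length_reverse, hp, hq, add_assoc]
  obtain ⟨y, c, hc, hco, hle⟩ := w.exists_isCycle_odd_length_le (by rw [hw, Nat.odd_iff]; omega)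
  have := hcyc y c hc hco
  omega

end closedBall

theorem colorable_succ_of_isIndepSet {n : ℕ} {t : Set V} (ht : G.IsIndepSet t)
    (h : (G.induce tᶜ).Colorable n) : G.Colorable (n + 1) := by
  classical
  obtain ⟨C⟩ := h
  refine ⟨Coloring.mk (fun v => if hv : v ∈ t then Fin.last n else (C ⟨v, hv⟩).castSucc) ?_⟩
  intro u v huv
  by_cases hu : u ∈ t <;> by_cases hv : v ∈ t <;> simp only [hu, hv, dite_true, dite_false]
  · exact absurd huv (ht hu hv huv.ne)
  · exact (Fin.castSucc_lt_last _).ne'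
  · exact (Fin.castSucc_lt_last _).ne
  · exact (Fin.castSucc_injective n).ne (C.valid huv)

theorem Colorable.induce_of_not_adj {n : ℕ} {s u : Set V} (h : (G.induce s).Colorable n)
    (hn : 0 < n) (hiso : ∀ v ∈ u, v ∉ s → ∀ w ∈ u, ¬G.Adj v w) : (G.induce u).Colorable n := by
  classical
  obtain ⟨C⟩ := h
  refine ⟨Coloring.mk (fun v => if hv : (v : V) ∈ s then C ⟨v, hv⟩ else ⟨0, hn⟩) ?_⟩
  rintro ⟨v, hvu⟩ ⟨w, hwu⟩ hvw
  by_cases hv : v ∈ s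
  · by_cases hw : w ∈ s
    · simp only [hv, hw, dite_true]
      exact C.valid (show (G.induce s).Adj ⟨v, hv⟩ ⟨w, hw⟩ from hvw)
    · exact absurd hvw.symm (hiso w hwu hw v hvu)
  · exact absurd hvw (hiso v hvu hv w hwu)

end SimpleGraph

open SimpleGraph

theorem color_extension_general {V : Type*} (X : SimpleGraph V) (k m : ℕ) (x : V)
    (hk : 1 ≤ k) (hm : 2 ≤ m)
    (hodd : ∀ (v : V) (w : X.Walk v v), w.IsCycle → Odd w.length → 2 * k + 1 ≤ w.length)
    (hcol : (X.induce ({y : V | ∃ w : X.Walk x y, w.length ≤ k - 1} : Set V)ᶜ).Colorable (m - 1)) :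
    X.Colorable m := by
  set B := X.closedBall x (k - 1)
  have parity {u v : V} (hu : u ∈ B) (hv : v ∈ B) (huv : X.Adj u v) :
      X.dist x u % 2 ≠ X.dist x v % 2 :=
    dist_mod_two_ne_of_adj_of_mem_closedBall hodd (by omega) hu hv huv
  set t : Set V := {y ∈ B | X.dist x y % 2 = (k - 1) % 2}
  have ht : X.IsIndepSet t := fun u hu v hv _ huv => parity hu.1 hv.1 huv (hu.2.trans hv.2.symm)
  have hiso : ∀ v ∈ tᶜ, v ∉ Bᶜ → ∀ w ∈ tᶜ, ¬X.Adj v w := by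
    intro v hvt hvB w hwt hvw
    rw [Set.notMem_compl_iff] at hvB
    by_cases hwB : w ∈ B
    · have hv : X.dist x v % 2 ≠ (k - 1) % 2 := fun h => hvt ⟨hvB, h⟩
      have := parity hvB hwB hvw
      exact hwt ⟨hwB, by omega⟩
    · exact hvt ⟨hvB, by rw [dist_eq_of_adj_of_mem_closedBall_of_notMem hvB hwB hvw]⟩
  have := colorable_succ_of_isIndepSet ht (hcol.induce_of_not_adj (by omega) hiso)
  rwa [Nat.sub_add_cancel (by omega)] at this

/-- **Lemma (coloring extension over a ball).** Let `X` be a finite simple graph with all odd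
cycles of length at least `2k+1` (`k ≥ 1`), `x` a vertex, `m ≥ 2`. If the subgraph induced on
the complement of the ball `B(x, k-1)` is properly colorable in `m-1` colors, then `X` is
properly colorable in `m` colors. -/
theorem color_extension {V : Type*} [Fintype V] (X : SimpleGraph V) (k m : ℕ) (x : V)
    (hk : 1 ≤ k) (hm : 2 ≤ m)
    (hodd : ∀ (v : V) (w : X.Walk v v), w.IsCycle → Odd w.length → 2 * k + 1 ≤ w.length)
    (hcol : (X.induce ({y : V | ∃ w : X.Walk x y, w.length ≤ k - 1} : Set V)ᶜ).Colorable (m - 1)) :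
    X.Colorable m :=
  color_extension_general X k m x hk hm hodd hcol
end

section
/- Fix a natural number r ≥ 0 and define integers b_n(i) for n ≥ 1 and 0 ≤ i ≤ r+1 by: b_1(i) = 2i+1 for 0 ≤ i ≤ r, b_1(r+1) = 2r+2, and b_n(i) = Σ_{j=0}^{i} b_{n−1}(j) for n ≥ 2 and 0 ≤ i ≤ r+1. Then for every n ≥ 1: b_n(i) ≥ 2·C(i+n−1, n) + C(i+n−1, n−1) for all 0 ≤ i ≤ r, and b_n(r+1) ≥ 2·C(r+n, n) + C(r+n, n−1) − 1. -/
/-- Hockey-stick identity (cast to ℤ). -/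
lemma hs_aux (m t : ℕ) (h : m ≤ t) (i : ℕ) :
    ∑ j ∈ Finset.range (i + 1), (((j + m).choose t : ℤ)) =
      ((i + m + 1).choose (t + 1) : ℤ) := by
  induction i with
  | zero =>
      simp [Nat.choose_succ_succ, Nat.choose_eq_zero_of_lt (Nat.lt_succ_of_le h)]
  | succ k ih =>
      have h1 : (k + m + 1 + 1).choose (t + 1)
          = (k + m + 1).choose t + (k + m + 1).choose (t + 1) :=
        Nat.choose_succ_succ _ _
      rw [Finset.sum_range_succ, ih, show k + 1 + m = k + m + 1 by ring, h1]
      push_cast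
      ring

/-- **Estimate for the recursively defined ball sizes `b_n(i)`.** With `b_1(i) = 2i+1` for
`0 ≤ i ≤ r`, `b_1(r+1) = 2r+2`, and `b_n(i) = Σ_{j=0}^{i} b_{n-1}(j)` for `n ≥ 2`, we have
`b_n(i) ≥ 2·C(i+n-1, n) + C(i+n-1, n-1)` for `0 ≤ i ≤ r` and
`b_n(r+1) ≥ 2·C(r+n, n) + C(r+n, n-1) - 1`, for every `n ≥ 1`. -/
theorem b_estimates (r : ℕ) (b : ℕ → ℕ → ℤ)
    (hb1 : ∀ i ≤ r, b 1 i = 2 * i + 1)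
    (hb1' : b 1 (r + 1) = 2 * r + 2)
    (hbn : ∀ n, 2 ≤ n → ∀ i ≤ r + 1, b n i = ∑ j ∈ Finset.range (i + 1), b (n - 1) j) :
    ∀ n, 1 ≤ n →
      (∀ i ≤ r,
        2 * (Nat.choose (i + n - 1) n : ℤ) + (Nat.choose (i + n - 1) (n - 1) : ℤ) ≤ b n i) ∧
      2 * (Nat.choose (r + n) n : ℤ) + (Nat.choose (r + n) (n - 1) : ℤ) - 1 ≤ b n (r + 1) := by
  intro n hn
  induction n, hn using Nat.le_induction with
  | base =>
      constructor
      · intro i hi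
        rw [hb1 i hi]
        simp [Nat.choose_one_right]
      · rw [hb1']
        simp [Nat.choose_one_right]
        ring_nf
        omega
  | succ n hn ih =>
      obtain ⟨m, rfl⟩ : ∃ m, n = m + 1 := ⟨n - 1, by omega⟩
      have key : ∀ i ≤ r,
          2 * ((i + m + 1).choose (m + 2) : ℤ) + ((i + m + 1).choose (m + 1) : ℤ)
            ≤ ∑ j ∈ Finset.range (i + 1), b (m + 1) j := by
        intro i hi
        have hsum : ∑ j ∈ Finset.range (i + 1),
            (2 * ((j + m).choose (m + 1) : ℤ) + ((j + m).choose m : ℤ)) ≤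
            ∑ j ∈ Finset.range (i + 1), b (m + 1) j := by
          apply Finset.sum_le_sum
          intro j hj
          have hj' : j ≤ r := by
            have := Finset.mem_range.mp hj; omega
          have h := ih.1 j hj'
          have e1 : j + (m + 1) - 1 = j + m := by omega
          have e2 : m + 1 - 1 = m := by omega
          rwa [e1, e2] at h
        rw [Finset.sum_add_distrib, ← Finset.mul_sum,
          hs_aux m (m + 1) (Nat.le_succ m), hs_aux m m le_rfl] at hsum
        exact hsum
      constructor
      · intro i hi
        rw [hbn (m + 2) (by omega) i (by omega),
          show m + 2 - 1 = m + 1 from rfl]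
        have e1 : i + (m + 1 + 1) - 1 = i + m + 1 := by omega
        rw [e1, show m + 1 + 1 = m + 2 from rfl]
        exact key i hi
      · rw [hbn (m + 2) (by omega) (r + 1) le_rfl,
          show m + 2 - 1 = m + 1 from rfl, Finset.sum_range_succ]
        have h1 := key r le_rfl
        have h2 := ih.2
        have e1 : r + (m + 1) = r + m + 1 := by omega
        have e2 : m + 1 - 1 = m := by omega
        rw [e1, e2] at h2
        have p1 : ((r + m + 2).choose (m + 2) : ℤ)
            = ((r + m + 1).choose (m + 1) : ℤ) + ((r + m + 1).choose (m + 2) : ℤ) := by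
          rw [show r + m + 2 = (r + m + 1) + 1 by ring]
          exact_mod_cast congrArg (Nat.cast (R := ℤ)) (Nat.choose_succ_succ (r + m + 1) (m + 1))
        have p2 : ((r + m + 2).choose (m + 1) : ℤ)
            = ((r + m + 1).choose m : ℤ) + ((r + m + 1).choose (m + 1) : ℤ) := by
          rw [show r + m + 2 = (r + m + 1) + 1 by ring]
          exact_mod_cast congrArg (Nat.cast (R := ℤ)) (Nat.choose_succ_succ (r + m + 1) m)
        have e3 : r + (m + 1 + 1) = r + m + 2 := by omega
        rw [e3, show m + 1 + 1 = m + 2 from rfl]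
        linarith
end

section
/- Let k ≥ 2 and m ≥ 1. Set s = ⌊m/2⌋. Then Σ_{c=1}^{m} ( 2·C(k−2+⌊c/2⌋, ⌊c/2⌋) + C(k−2+⌊c/2⌋, ⌊c/2⌋−1) ) equals 4·C(k−1+s, s) + 2·C(k−1+s, s−1) − 2 if m is odd, and equals 4·C(k−1+s, s) + 2·C(k−1+s, s−1) − 2 − ( 2·C(k−2+s, s) + C(k−2+s, s−1) ) if m is even. -/
/-- Binomial coefficient with integer arguments: `C a b = 0` when `b < 0` or `b > a`. -/
def intBinom (a b : ℤ) : ℤ := if b < 0 ∨ a < b then 0 else Nat.choose a.toNat b.toNat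

lemma intBinom_neg (a b : ℤ) (hb : b < 0) : intBinom a b = 0 := by
  unfold intBinom; rw [if_pos (Or.inl hb)]

lemma intBinom_natCast (x y : ℕ) : intBinom (x:ℤ) (y:ℤ) = x.choose y := by
  unfold intBinom
  split
  · next h =>
    rcases h with h | h
    · omega
    · rw [Nat.choose_eq_zero_of_lt (by exact_mod_cast h)]; simp
  · simp

lemma intBinom_zero_right (a : ℤ) (ha : 0 ≤ a) : intBinom a 0 = 1 := by
  lift a to ℕ using ha
  simpa using intBinom_natCast a 0

lemma intBinom_pascal (a b : ℤ) (ha : 0 ≤ a) :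
    intBinom (a+1) b = intBinom a b + intBinom a (b-1) := by
  rcases lt_or_ge b 0 with hb | hb
  · rw [intBinom_neg _ _ hb, intBinom_neg _ _ hb, intBinom_neg _ _ (by linarith)]; ring
  rcases eq_or_lt_of_le hb with hb0 | hb1
  · rw [← hb0]
    rw [intBinom_zero_right _ (by linarith), intBinom_zero_right _ ha,
      intBinom_neg _ _ (by norm_num)]
    ring
  · lift a to ℕ using ha
    have hb1' : 1 ≤ b := hb1
    lift b to ℕ using hb
    have hb2 : 1 ≤ b := by exact_mod_cast hb1'
    obtain ⟨n, rfl⟩ : ∃ n, b = n + 1 := ⟨b - 1, by omega⟩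
    have h1 : ((a:ℤ) + 1) = ((a+1 : ℕ) : ℤ) := by push_cast; ring
    have h2 : ((n+1:ℕ):ℤ) - 1 = ((n:ℕ):ℤ) := by push_cast; ring
    rw [h1, h2, intBinom_natCast, intBinom_natCast, intBinom_natCast,
      Nat.choose_succ_succ]
    push_cast; ring

/-- The summand. -/
def Tm (k : ℕ) (b : ℤ) : ℤ :=
  2 * intBinom ((k:ℤ) - 2 + b) b + intBinom ((k:ℤ) - 2 + b) (b - 1)

lemma Tm_pascal (k : ℕ) (hk : 2 ≤ k) (b : ℤ) (hb : 0 ≤ b) :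
    Tm (k+1) b = Tm k b + Tm (k+1) (b-1) := by
  unfold Tm
  have hk' : (2:ℤ) ≤ (k:ℤ) := by exact_mod_cast hk
  have ha : (0:ℤ) ≤ (k:ℤ) - 2 + b := by linarith
  have h1 : ((k+1:ℕ):ℤ) - 2 + b = ((k:ℤ) - 2 + b) + 1 := by push_cast; ring
  have h2 : ((k+1:ℕ):ℤ) - 2 + (b-1) = (k:ℤ) - 2 + b := by push_cast; ring
  rw [h1, h2, intBinom_pascal _ _ ha, intBinom_pascal _ _ ha]
  ring

lemma Tm_zero (k : ℕ) (hk : 2 ≤ k) : Tm k 0 = 2 := by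
  have hk' : (2:ℤ) ≤ (k:ℤ) := by exact_mod_cast hk
  unfold Tm
  rw [intBinom_zero_right _ (by linarith), intBinom_neg _ _ (by norm_num)]
  ring

lemma sum_odd (k : ℕ) (hk : 2 ≤ k) (n : ℕ) :
    ∑ c ∈ Finset.Icc 1 (2*n+1), Tm k ((c/2 : ℕ) : ℤ) = 2 * Tm (k+1) (n : ℤ) - 2 := by
  induction n with
  | zero =>
    simp [Tm_zero k hk, Tm_zero (k+1) (by omega)]
  | succ n ih =>
    have h1 : 2*(n+1)+1 = (2*n+1+1) + 1 := by ring
    rw [h1, Finset.sum_Icc_succ_top (by omega), Finset.sum_Icc_succ_top (by omega), ih]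
    have e1 : ((2*n+1+1)/2 : ℕ) = n+1 := by omega
    have e2 : ((2*n+1+1+1)/2 : ℕ) = n+1 := by omega
    rw [e1, e2]
    have hp := Tm_pascal k hk ((n:ℤ)+1) (by positivity)
    have hc : ((n:ℤ)+1) - 1 = (n:ℤ) := by ring
    have hc2 : ((n+1:ℕ):ℤ) = (n:ℤ)+1 := by push_cast; ring
    rw [hc] at hp
    rw [hc2]
    linarith

lemma sum_even (k : ℕ) (hk : 2 ≤ k) (n : ℕ) :
    ∑ c ∈ Finset.Icc 1 (2*n+2), Tm k ((c/2 : ℕ) : ℤ)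
      = 2 * Tm (k+1) ((n:ℤ)+1) - 2 - Tm k ((n:ℤ)+1) := by
  have h1 : 2*n+2 = (2*n+1) + 1 := by ring
  rw [h1, Finset.sum_Icc_succ_top (by omega), sum_odd k hk n]
  have e1 : ((2*n+1+1)/2 : ℕ) = n+1 := by omega
  rw [e1]
  have hp := Tm_pascal k hk ((n:ℤ)+1) (by positivity)
  have hc : ((n:ℤ)+1) - 1 = (n:ℤ) := by ring
  rw [hc] at hp
  have hc2 : ((n+1:ℕ):ℤ) = (n:ℤ)+1 := by push_cast; ring
  rw [hc2]
  linarith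

/-- **Closed form of the MIX-3 sum.** For `k ≥ 2`, `m ≥ 1`, `s = ⌊m/2⌋`:
`Σ_{c=1}^{m} (2·C(k-2+⌊c/2⌋, ⌊c/2⌋) + C(k-2+⌊c/2⌋, ⌊c/2⌋-1))` equals
`4·C(k-1+s, s) + 2·C(k-1+s, s-1) - 2` if `m` is odd, and that minus
`2·C(k-2+s, s) + C(k-2+s, s-1)` if `m` is even. -/
theorem mix3_sum_closed_form (k m : ℕ) (s : ℤ) (hk : 2 ≤ k) (hm : 1 ≤ m)
    (hs : s = ((m / 2 : ℕ) : ℤ)) :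
    (Odd m →
      ∑ c ∈ Finset.Icc 1 m,
          (2 * intBinom ((k : ℤ) - 2 + ((c / 2 : ℕ) : ℤ)) ((c / 2 : ℕ) : ℤ)
            + intBinom ((k : ℤ) - 2 + ((c / 2 : ℕ) : ℤ)) (((c / 2 : ℕ) : ℤ) - 1))
        = 4 * intBinom ((k : ℤ) - 1 + s) s + 2 * intBinom ((k : ℤ) - 1 + s) (s - 1) - 2) ∧
    (Even m →
      ∑ c ∈ Finset.Icc 1 m,
          (2 * intBinom ((k : ℤ) - 2 + ((c / 2 : ℕ) : ℤ)) ((c / 2 : ℕ) : ℤ)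
            + intBinom ((k : ℤ) - 2 + ((c / 2 : ℕ) : ℤ)) (((c / 2 : ℕ) : ℤ) - 1))
        = 4 * intBinom ((k : ℤ) - 1 + s) s + 2 * intBinom ((k : ℤ) - 1 + s) (s - 1) - 2
            - (2 * intBinom ((k : ℤ) - 2 + s) s + intBinom ((k : ℤ) - 2 + s) (s - 1))) := by
  have hT : ∀ (b : ℤ), 2 * Tm (k+1) b
      = 4 * intBinom ((k : ℤ) - 1 + b) b + 2 * intBinom ((k : ℤ) - 1 + b) (b - 1) := by
    intro b
    unfold Tm
    have h : ((k+1:ℕ):ℤ) - 2 + b = (k:ℤ) - 1 + b := by push_cast; ring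
    rw [h]; ring
  constructor
  · rintro ⟨n, rfl⟩
    have hs' : s = (n : ℤ) := by rw [hs]; congr 1; omega
    rw [← hT s, hs']
    exact sum_odd k hk n
  · rintro ⟨n, rfl⟩
    have hn : 1 ≤ n := by omega
    obtain ⟨p, rfl⟩ : ∃ p, n = p + 1 := ⟨n - 1, by omega⟩
    have hs' : s = (p : ℤ) + 1 := by rw [hs]; push_cast [show (p+1+(p+1))/2 = p+1 by omega]; ring
    have h2 : (p+1)+(p+1) = 2*p+2 := by ring
    have hTm : Tm k s = 2 * intBinom ((k : ℤ) - 2 + s) s + intBinom ((k : ℤ) - 2 + s) (s - 1) := rfl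
    rw [← hT s, ← hTm, hs', h2]
    exact sum_even k hk p
end

section
/- Let X be a finite simple graph such that every cycle of X has length at least g (g ≥ 3), let n ≥ 1, and suppose the vertex set V(X) cannot be partitioned into n or fewer sets each of which induces a forest (an acyclic subgraph). Then |V(X)| ≥ C(n + ⌊g/2⌋ − 1, n−1) + 2·C(n + ⌊g/2⌋ − 1, n) − 1. -/
/-!
Induction on `n` and on the vertex set `S`. If some vertex of `S` has fewer than `2n` neighbours
in `S`, one of the `n` forest classes of the rest contains at most one of them, so the vertex can
join that class; hence it can be deleted. Otherwise `S` has minimum degree `2n`, and since there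
are no cycles of length `< 2k` (`k = ⌊g/2⌋`) the breadth-first search from a vertex grows like a
tree up to depth `k - 1`: the ball of radius `k - 1` induces a forest and has at least the Moore
number `1 + 2n ∑_{i < k-1} (2n-1)^i ≥ C(n+k-2, n-1) + 2 C(n+k-2, n)` of vertices. The ball can be
used as one colour class, so the rest of `S` cannot be covered by `n - 1` forests, and Pascal's
rule adds the two bounds up.
-/

open Finset

/-- The paper's `C(N+k-1, N-1) + 2 C(N+k-1, N)` for `N = n + 1` forest classes and
`k = ⌊g/2⌋`, reindexed to avoid truncated subtraction. -/
def systolicBound (n k : ℕ) : ℕ := (n + k).choose n + 2 * (n + k).choose (n + 1)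

/-- The number of vertices within distance `m` of a vertex of the `d`-regular tree. -/
def mooreBound (d m : ℕ) : ℕ := 1 + d * ∑ i ∈ range m, (d - 1) ^ i

lemma systolicBound_succ_succ (n m : ℕ) :
    systolicBound (n + 1) (m + 1) = systolicBound n (m + 1) + systolicBound (n + 1) m := by
  simp only [systolicBound, show n + 1 + (m + 1) = n + (m + 1) + 1 by ring,
    show n + 1 + m = n + (m + 1) by ring, Nat.choose_succ_succ']
  ring

lemma mooreBound_succ (d m : ℕ) : mooreBound d (m + 1) = mooreBound d m + d * (d - 1) ^ m := by
  simp only [mooreBound, sum_range_succ]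
  ring

lemma systolicBound_le_pow (n m : ℕ) : systolicBound n (m + 1) ≤ (n + 3) * (n + 2) ^ m := by
  have hlow : (n + (m + 1)).choose n ≤ (n + 1) * (n + (m + 1)).choose (n + 1) := by
    have h := Nat.choose_succ_right_eq (n + (m + 1)) n
    rw [show n + (m + 1) - n = m + 1 by omega] at h
    nlinarith
  have htop : (n + (m + 1)).choose (n + 1) ≤ (n + 2) ^ m := by
    rw [show n + (m + 1) = n + 1 + m by ring, Nat.choose_symm_add]
    exact Nat.choose_add_le_add_one_pow (n + 1) m
  calc systolicBound n (m + 1) ≤ (n + 3) * (n + (m + 1)).choose (n + 1) := by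
        unfold systolicBound; linarith
    _ ≤ (n + 3) * (n + 2) ^ m := Nat.mul_le_mul_left _ htop

lemma systolicBound_le_mooreBound (n m : ℕ) :
    systolicBound (n + 1) m ≤ mooreBound (2 * (n + 2)) m := by
  induction m with
  | zero => simp [systolicBound, mooreBound]
  | succ m ih =>
    rw [systolicBound_succ_succ, mooreBound_succ, add_comm]
    gcongr
    calc systolicBound n (m + 1) ≤ (n + 3) * (n + 2) ^ m := systolicBound_le_pow n m
      _ ≤ 2 * (n + 2) * (2 * (n + 2) - 1) ^ m := by gcongr <;> omega

namespace SimpleGraph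

variable {V : Type*} {G : SimpleGraph V}

lemma Walk.IsCycle.exists_adj_adj_ne {u x : V} {c : G.Walk u u} (hc : c.IsCycle)
    (hx : x ∈ c.support) :
    ∃ a b, a ≠ b ∧ G.Adj x a ∧ G.Adj x b ∧ a ∈ c.support ∧ b ∈ c.support := by
  classical
  have hc' := hc.rotate hx
  refine ⟨_, _, hc'.snd_ne_penultimate, Walk.adj_snd hc'.not_nil,
    (Walk.adj_penultimate hc'.not_nil).symm, ?_, ?_⟩ <;>
  exact (c.mem_support_rotate_iff x hx).1 (Walk.getVert_mem_support _ _)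

lemma Walk.IsCycle.length_le_card [Fintype V] {u : V} {c : G.Walk u u} (hc : c.IsCycle) :
    c.length ≤ Fintype.card V := by
  cases c with
  | nil => exact (Walk.not_isCycle_nil hc).elim
  | cons h p => exact ((Walk.cons_isCycle_iff p h).1 hc).1.length_lt

lemma egirth_le_card [Fintype V] (h : ¬ G.IsAcyclic) : G.egirth ≤ Fintype.card V := by
  obtain ⟨u, c, hc, hlen⟩ := exists_egirth_eq_length.2 h
  rw [hlen]
  exact_mod_cast hc.length_le_card

lemma egirth_le_egirth_induce (s : Set V) : G.egirth ≤ (G.induce s).egirth :=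
  (Embedding.induce s).isContained.egirth_le

lemma egirth_le_card_of_not_isAcyclic_induce [Fintype V] {S : Finset V}
    (h : ¬ (G.induce S).IsAcyclic) : G.egirth ≤ #S := by
  simpa only [SetLike.coe_sort_coe, Fintype.card_coe] using
    (egirth_le_egirth_induce (G := G) S).trans (egirth_le_card h)

lemma isAcyclic_induce_iff {s : Set V} :
    (G.induce s).IsAcyclic ↔ ∀ ⦃u⦄ (c : G.Walk u u), c.IsCycle → ∃ x ∈ c.support, x ∉ s := by
  constructor
  · intro h u c hc
    by_contra! hcs
    refine h (c.induce s hcs) ?_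
    rw [← Walk.isCycle_map_iff_of_injective (f := (Embedding.induce (G := G) s).toHom)
      (Embedding.induce (G := G) s).injective, Walk.map_induce]
    exact hc
  · intro h u c hc
    obtain ⟨x, hx, hxs⟩ := h _ (hc.map (f := (Embedding.induce (G := G) s).toHom)
      (Embedding.induce (G := G) s).injective)
    rw [Walk.support_map] at hx
    obtain ⟨y, -, rfl⟩ := List.mem_map.1 hx
    exact hxs y.2

lemma IsAcyclic.induce_of_subset {s t : Set V} (ht : (G.induce t).IsAcyclic) (hst : s ⊆ t) :
    (G.induce s).IsAcyclic :=
  ht.embedding (G.induceHomOfLE hst)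

lemma isAcyclic_induce_insert {s : Set V} {u : V} (hs : (G.induce s).IsAcyclic)
    (hu : (G.neighborSet u ∩ s).Subsingleton) : (G.induce (insert u s)).IsAcyclic := by
  rw [isAcyclic_induce_iff] at hs ⊢
  intro w c hc
  by_contra! hcs
  by_cases huc : u ∈ c.support
  · obtain ⟨a, b, hab, ha, hb, hac, hbc⟩ := hc.exists_adj_adj_ne huc
    have has : a ∈ s := (hcs a hac).resolve_left ha.ne'
    have hbs : b ∈ s := (hcs b hbc).resolve_left hb.ne'
    exact hab (hu ⟨ha, has⟩ ⟨hb, hbs⟩)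
  · obtain ⟨x, hx, hxs⟩ := hs c hc
    exact (hcs x hx).elim (fun hxu => huc (hxu ▸ hx)) hxs

def ForestColorableOn (G : SimpleGraph V) (n : ℕ) (s : Set V) : Prop :=
  ∃ f : V → Fin n, ∀ c, (G.induce (s ∩ f ⁻¹' {c})).IsAcyclic

lemma forestColorableOn_empty (n : ℕ) : G.ForestColorableOn (n + 1) ∅ :=
  ⟨fun _ => 0, fun _ => isAcyclic_induce_iff.2 fun u c _ => ⟨u, c.start_mem_support, fun h => h.1⟩⟩

lemma forestColorableOn_one {s : Set V} (hs : (G.induce s).IsAcyclic) :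
    G.ForestColorableOn 1 s :=
  ⟨fun _ => 0, fun _ => hs.induce_of_subset Set.inter_subset_left⟩

lemma ForestColorableOn.union {n : ℕ} {s t : Set V} (hs : G.ForestColorableOn n s)
    (ht : (G.induce t).IsAcyclic) : G.ForestColorableOn (n + 1) (s ∪ t) := by
  classical
  obtain ⟨f, hf⟩ := hs
  refine ⟨fun x => if x ∈ t then Fin.last n else (f x).castSucc, fun c => ?_⟩
  induction c using Fin.lastCases with
  | last =>
    refine ht.induce_of_subset fun x ⟨_, hx⟩ => ?_
    by_contra hxt
    simp [hxt, Fin.castSucc_ne_last] at hx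
  | cast c =>
    refine (hf c).induce_of_subset fun x ⟨hx, hxc⟩ => ?_
    by_cases hxt : x ∈ t
    · simp only [Set.mem_preimage, Set.mem_singleton_iff, hxt, if_true] at hxc
      exact absurd hxc.symm (Fin.castSucc_ne_last c)
    · simp only [Set.mem_preimage, Set.mem_singleton_iff, hxt, if_false,
        Fin.castSucc_inj] at hxc
      exact ⟨hx.resolve_right hxt, hxc⟩

lemma ForestColorableOn.insert [Fintype V] [DecidableEq V] [DecidableRel G.Adj] {n : ℕ}
    {S : Finset V} (hS : G.ForestColorableOn n S) {u : V}
    (hu : #(G.neighborFinset u ∩ S) < 2 * n) : G.ForestColorableOn n ↑(insert u S) := by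
  obtain ⟨f, hf⟩ := hS
  obtain ⟨c, -, hc⟩ := exists_card_fiber_lt_of_card_lt_mul (s := G.neighborFinset u ∩ S)
    (f := f) (t := univ) (n := 2) (by rwa [card_univ, Fintype.card_fin, mul_comm])
  refine ⟨Function.update f u c, fun c' => ?_⟩
  have hclass : ∀ x ∈ (↑(Insert.insert u S) ∩ Function.update f u c ⁻¹' {c'} : Set V), x ≠ u →
      x ∈ (↑S ∩ f ⁻¹' {c'} : Set V) := fun x ⟨hx, hxc⟩ hxu => by
    rw [Set.mem_preimage, Function.update_of_ne hxu] at hxc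
    exact ⟨(mem_insert.1 hx).resolve_left hxu, hxc⟩
  rcases eq_or_ne c' c with rfl | hcc'
  · refine (isAcyclic_induce_insert (u := u) (hf c') ?_).induce_of_subset fun x hx => ?_
    · rintro a ⟨ha, haS, hac⟩ b ⟨hb, hbS, hbc⟩
      exact card_le_one.1 (Nat.lt_succ_iff.1 hc) a
        (mem_filter.2 ⟨mem_inter.2 ⟨(G.mem_neighborFinset u a).2 ha, haS⟩, hac⟩) b
        (mem_filter.2 ⟨mem_inter.2 ⟨(G.mem_neighborFinset u b).2 hb, hbS⟩, hbc⟩)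
    · rcases eq_or_ne x u with rfl | hxu
      · exact Or.inl rfl
      · exact Or.inr (hclass x hx hxu)
  · refine (hf c').induce_of_subset fun x hx => hclass x hx ?_
    rintro rfl
    exact hcc' (by simpa using hx.2.symm)

lemma Walk.notMem_support_of_dist_le {v x y : V} (p : G.Walk v x) (hp : p.length = G.dist v x)
    (hle : G.dist v x ≤ G.dist v y) (hyx : y ≠ x) : y ∉ p.support := by
  classical
  intro hy
  have hsplit : (p.takeUntil y hy).length + (p.dropUntil y hy).length = p.length := by
    rw [← Walk.length_append, p.take_spec hy]
  have hdrop : (p.dropUntil y hy).length ≠ 0 := fun h => hyx (Walk.eq_of_length_eq_zero h)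
  have := G.dist_le (p.takeUntil y hy)
  omega

lemma egirth_le_length_add_length_add_one {v a b : V} (p : G.Walk v a) (q : G.Walk v b)
    (hab : G.Adj a b) (ha : a ∉ q.support) (hb : b ∉ p.support) :
    G.egirth ≤ p.length + q.length + 1 := by
  classical
  have hedge : s(a, b) ∉ (q.reverse.append p).bypass.edges := fun he => by
    rcases List.mem_append.1
      (Walk.edges_append _ _ ▸ Walk.edges_bypass_subset_edges _ he) with h | h
    · rw [Walk.edges_reverse, List.mem_reverse] at h
      exact ha (q.fst_mem_support_of_mem_edges h)
    · exact hb (p.snd_mem_support_of_mem_edges h)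
  have hcyc := (Walk.cons_isCycle_iff _ hab).2 ⟨Walk.bypass_isPath _, hedge⟩
  have hlen := (q.reverse.append p).length_bypass_le_length
  rw [Walk.length_append, Walk.length_reverse] at hlen
  calc G.egirth ≤ (Walk.cons hab (q.reverse.append p).bypass).length := egirth_le_length hcyc
    _ ≤ p.length + q.length + 1 := by rw [Walk.length_cons]; norm_cast; omega

variable {m : ℕ} {v : V}

lemma dist_ne_of_adj (hG : (2 * m + 2 : ℕ∞) ≤ G.egirth) {x y : V} (hx : G.Reachable v x)
    (hxm : G.dist v x ≤ m) (hxy : G.Adj x y) : G.dist v x ≠ G.dist v y := by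
  intro hd
  obtain ⟨p, hp⟩ := hx.exists_walk_length_eq_dist
  obtain ⟨q, hq⟩ := (hx.trans hxy.reachable).exists_walk_length_eq_dist
  have h := egirth_le_length_add_length_add_one p q hxy
    (q.notMem_support_of_dist_le hq hd.ge hxy.ne) (p.notMem_support_of_dist_le hp hd.le hxy.ne')
  have : (2 * m + 2 : ℕ∞) ≤ ((p.length + q.length + 1 : ℕ) : ℕ∞) :=
    hG.trans (by exact_mod_cast h)
  norm_cast at this
  omega

lemma eq_of_adj_of_dist_eq_add_one (hG : (2 * m + 2 : ℕ∞) ≤ G.egirth) {x₁ x₂ y : V}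
    (hx₁ : G.Reachable v x₁) (hx₂ : G.Reachable v x₂) (h₁ : G.Adj x₁ y) (h₂ : G.Adj x₂ y)
    (hd₁ : G.dist v y = G.dist v x₁ + 1) (hd₂ : G.dist v y = G.dist v x₂ + 1)
    (hym : G.dist v y ≤ m) : x₁ = x₂ := by
  by_contra hne
  obtain ⟨p, hp⟩ := hx₁.exists_walk_length_eq_dist
  obtain ⟨q, hq⟩ := hx₂.exists_walk_length_eq_dist
  have hx₁q : x₁ ∉ (q.concat h₂).support := by
    rw [Walk.support_concat, List.mem_append, List.mem_singleton, not_or]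
    exact ⟨q.notMem_support_of_dist_le hq (by omega) hne, h₁.ne⟩
  have h := egirth_le_length_add_length_add_one p (q.concat h₂) h₁ hx₁q
    (p.notMem_support_of_dist_le hp (by omega) h₁.ne')
  have : (2 * m + 2 : ℕ∞) ≤ ((p.length + (q.length + 1) + 1 : ℕ) : ℕ∞) :=
    hG.trans (by rw [← Walk.length_concat q h₂]; exact_mod_cast h)
  norm_cast at this
  omega

lemma dist_eq_add_one_of_adj (hG : (2 * m + 2 : ℕ∞) ≤ G.egirth) {x y : V}
    (hx : G.Reachable v x) (hxm : G.dist v x ≤ m) (hxy : G.Adj x y)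
    (hle : G.dist v y ≤ G.dist v x) : G.dist v x = G.dist v y + 1 := by
  have hne := dist_ne_of_adj hG hx hxm hxy
  rcases hxy.symm.diff_dist_adj (u := v) with h | h | h <;> omega

section Balls

variable [Fintype V] [DecidableEq V] [DecidableRel G.Adj]

variable (G v) in
noncomputable def sphereFinset (i : ℕ) : Finset V := {x | G.Reachable v x ∧ G.dist v x = i}

variable (G v) in
noncomputable def closedBallFinset (r : ℕ) : Finset V := {x | G.Reachable v x ∧ G.dist v x ≤ r}

@[simp] lemma mem_sphereFinset {i : ℕ} {x : V} :
    x ∈ G.sphereFinset v i ↔ G.Reachable v x ∧ G.dist v x = i := by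
  simp [sphereFinset]

@[simp] lemma mem_closedBallFinset {r : ℕ} {x : V} :
    x ∈ G.closedBallFinset v r ↔ G.Reachable v x ∧ G.dist v x ≤ r := by
  simp [closedBallFinset]

lemma degree_le_card_neighborFinset_inter_sphereFinset_add_one
    (hG : (2 * m + 2 : ℕ∞) ≤ G.egirth) {x : V} (hx : G.Reachable v x) (hxm : G.dist v x ≤ m) :
    G.degree x ≤ #(G.neighborFinset x ∩ G.sphereFinset v (G.dist v x + 1)) + 1 := by
  set parents := {y ∈ G.neighborFinset x | G.dist v x = G.dist v y + 1}
  have hparents : #parents ≤ 1 := card_le_one.2 fun y₁ hy₁ y₂ hy₂ => by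
    simp only [parents, mem_filter, mem_neighborFinset] at hy₁ hy₂
    exact eq_of_adj_of_dist_eq_add_one hG (hx.trans hy₁.1.reachable)
      (hx.trans hy₂.1.reachable) hy₁.1.symm hy₂.1.symm hy₁.2 hy₂.2 hxm
  have hcover : G.neighborFinset x ⊆
      (G.neighborFinset x ∩ G.sphereFinset v (G.dist v x + 1)) ∪ parents := fun y hy => by
    have hxy := (G.mem_neighborFinset x y).1 hy
    simp only [parents, mem_union, mem_inter, mem_sphereFinset, mem_filter]
    by_cases hd : G.dist v y = G.dist v x + 1
    · exact Or.inl ⟨hy, hx.trans hxy.reachable, hd⟩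
    · refine Or.inr ⟨hy, dist_eq_add_one_of_adj hG hx hxm hxy ?_⟩
      rcases hxy.diff_dist_adj (u := v) with h | h | h <;> omega
  rw [← card_neighborFinset_eq_degree]
  exact (card_le_card hcover).trans ((card_union_le _ _).trans (by omega))

lemma mul_card_sphereFinset_le (hG : (2 * m + 2 : ℕ∞) ≤ G.egirth) {d : ℕ}
    (hdeg : ∀ x, G.Reachable v x → d ≤ G.degree x) {j : ℕ} (hj : j < m) :
    (d - 1) * #(G.sphereFinset v j) ≤ #(G.sphereFinset v (j + 1)) := by
  have hchildren : ∀ x ∈ G.sphereFinset v j,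
      d - 1 ≤ #(G.neighborFinset x ∩ G.sphereFinset v (j + 1)) := fun x hx => by
    rw [mem_sphereFinset] at hx
    have hchild := degree_le_card_neighborFinset_inter_sphereFinset_add_one hG hx.1 (by omega)
    rw [hx.2] at hchild
    have := hdeg x hx.1
    omega
  set children := fun x => G.neighborFinset x ∩ G.sphereFinset v (j + 1)
  have hdisj : (G.sphereFinset v j : Set V).PairwiseDisjoint children := by
    intro x₁ hx₁ x₂ hx₂ hne
    refine Finset.disjoint_left.2 fun y hy₁ hy₂ => hne ?_
    simp only [children, mem_coe, mem_sphereFinset, mem_inter, mem_neighborFinset]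
      at hx₁ hx₂ hy₁ hy₂
    exact eq_of_adj_of_dist_eq_add_one hG hx₁.1 hx₂.1 hy₁.1 hy₂.1 (by omega) (by omega)
      (by omega)
  calc (d - 1) * #(G.sphereFinset v j) = ∑ _x ∈ G.sphereFinset v j, (d - 1) := by
        rw [sum_const, smul_eq_mul, mul_comm]
    _ ≤ ∑ x ∈ G.sphereFinset v j, #(children x) := sum_le_sum hchildren
    _ = #((G.sphereFinset v j).biUnion children) := (card_biUnion hdisj).symm
    _ ≤ #(G.sphereFinset v (j + 1)) :=
        card_le_card (biUnion_subset.2 fun _ _ => inter_subset_right)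

lemma degree_le_card_sphereFinset_one : G.degree v ≤ #(G.sphereFinset v 1) := by
  rw [← card_neighborFinset_eq_degree]
  refine card_le_card fun y hy => ?_
  have hvy := (G.mem_neighborFinset v y).1 hy
  exact mem_sphereFinset.2 ⟨hvy.reachable, dist_eq_one_iff_adj.2 hvy⟩

lemma mul_pow_le_card_sphereFinset (hG : (2 * m + 2 : ℕ∞) ≤ G.egirth) {d : ℕ}
    (hdeg : ∀ x, G.Reachable v x → d ≤ G.degree x) {j : ℕ} (hj : j < m) :
    d * (d - 1) ^ j ≤ #(G.sphereFinset v (j + 1)) := by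
  induction j with
  | zero => simpa using (hdeg v .rfl).trans degree_le_card_sphereFinset_one
  | succ j ih =>
    calc d * (d - 1) ^ (j + 1) = (d - 1) * (d * (d - 1) ^ j) := by ring
      _ ≤ (d - 1) * #(G.sphereFinset v (j + 1)) := Nat.mul_le_mul_left _ (ih (by omega))
      _ ≤ _ := mul_card_sphereFinset_le hG hdeg hj

lemma mooreBound_le_card_closedBallFinset (hG : (2 * m + 2 : ℕ∞) ≤ G.egirth) {d : ℕ}
    (hdeg : ∀ x, G.Reachable v x → d ≤ G.degree x) :
    mooreBound d m ≤ #(G.closedBallFinset v m) := by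
  have hball : G.closedBallFinset v m = (range (m + 1)).biUnion (G.sphereFinset v) := by
    ext x
    simp only [mem_closedBallFinset, mem_biUnion, mem_range, mem_sphereFinset]
    exact ⟨fun h => ⟨_, by omega, h.1, rfl⟩, fun ⟨j, hj, h, hd⟩ => ⟨h, by omega⟩⟩
  have hdisj : ((range (m + 1) : Finset ℕ) : Set ℕ).PairwiseDisjoint (G.sphereFinset v) :=
    fun i _ j _ hij => Finset.disjoint_left.2 fun x hi hj => hij <| by
      rw [mem_sphereFinset] at hi hj
      omega
  have hcenter : 1 ≤ #(G.sphereFinset v 0) := card_pos.2 ⟨v, by simp⟩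
  rw [hball, card_biUnion hdisj, sum_range_succ', mooreBound, mul_sum, add_comm]
  gcongr with j hj
  exact mul_pow_le_card_sphereFinset hG hdeg (mem_range.1 hj)

/-- A cycle inside the ball would have a vertex farthest from `v` with two distinct neighbours
one step closer to `v`. -/
lemma isAcyclic_induce_closedBallFinset (hG : (2 * m + 2 : ℕ∞) ≤ G.egirth) :
    (G.induce (G.closedBallFinset v m)).IsAcyclic := by
  rw [isAcyclic_induce_iff]
  intro u c hc
  by_contra! hball
  obtain ⟨x, hxc, hxmax⟩ := c.support.toFinset.exists_max_image (G.dist v) ⟨u, by simp⟩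
  rw [List.mem_toFinset] at hxc
  have hx := mem_closedBallFinset.1 (hball x hxc)
  have parent : ∀ y ∈ c.support, G.Adj x y → G.dist v x = G.dist v y + 1 := fun y hy hxy =>
    dist_eq_add_one_of_adj hG hx.1 hx.2 hxy (hxmax y (List.mem_toFinset.2 hy))
  obtain ⟨a, b, hab, ha, hb, hac, hbc⟩ := hc.exists_adj_adj_ne hxc
  exact hab (eq_of_adj_of_dist_eq_add_one hG (mem_closedBallFinset.1 (hball a hac)).1
    (mem_closedBallFinset.1 (hball b hbc)).1 ha.symm hb.symm (parent a hac ha)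
    (parent b hbc hb) hx.2)

end Balls

/-- The ball is taken in the spanning subgraph `H` of `G` keeping only the edges inside `S`, so
that distances, degrees and the ball itself stay inside `S`. -/
lemma exists_isAcyclic_induce_subset_mooreBound_le [Fintype V] [DecidableEq V]
    [DecidableRel G.Adj] (hG : (2 * m + 2 : ℕ∞) ≤ G.egirth) {S : Finset V} (hv : v ∈ S)
    {d : ℕ} (hdeg : ∀ u ∈ S, d ≤ #(G.neighborFinset u ∩ S)) :
    ∃ B ⊆ S, (G.induce B).IsAcyclic ∧ mooreBound d m ≤ #B := by
  classical
  set H := ((⊤ : G.Subgraph).induce S).spanningCoe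
  have hH : ∀ {x y}, H.Adj x y ↔ x ∈ S ∧ y ∈ S ∧ G.Adj x y := by simp [H]
  have hHG : (2 * m + 2 : ℕ∞) ≤ H.egirth := hG.trans (egirth_anti (Subgraph.spanningCoe_le _))
  have hreach : ∀ {x}, H.Reachable v x → x ∈ S := by
    rintro x ⟨p⟩
    by_cases hp : p.Nil
    · exact hp.eq ▸ hv
    · exact (hH.1 (p.adj_penultimate hp)).2.1
  refine ⟨H.closedBallFinset v m, fun x hx => hreach (mem_closedBallFinset.1 hx).1, ?_, ?_⟩
  · refine (isAcyclic_induce_closedBallFinset hHG).anti fun x y hxy => ?_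
    exact hH.2 ⟨hreach (mem_closedBallFinset.1 x.2).1, hreach (mem_closedBallFinset.1 y.2).1, hxy⟩
  · refine mooreBound_le_card_closedBallFinset hHG fun x hx => ?_
    have hnbr : H.neighborFinset x = G.neighborFinset x ∩ S := by
      ext y
      simp [hH, hreach hx, and_comm]
    rw [← card_neighborFinset_eq_degree, hnbr]
    exact hdeg x (hreach hx)

theorem systolicBound_le_card_add_one [Fintype V] [DecidableEq V] [DecidableRel G.Adj]
    (hG : (2 * m + 2 : ℕ∞) ≤ G.egirth) (n : ℕ) (S : Finset V)
    (hS : ¬ G.ForestColorableOn (n + 1) S) : systolicBound n (m + 1) ≤ #S + 1 := by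
  induction n generalizing S with
  | zero =>
    have h := hG.trans <|
      egirth_le_card_of_not_isAcyclic_induce fun h => hS (forestColorableOn_one h)
    norm_cast at h
    simp only [systolicBound, zero_add, Nat.choose_zero_right, Nat.choose_one_right]
    omega
  | succ n ihn =>
    induction S using Finset.strongInduction with
    | H S ihS =>
    by_cases hlow : ∃ u ∈ S, #(G.neighborFinset u ∩ S) < 2 * (n + 2)
    · obtain ⟨u, hu, hdeg⟩ := hlow
      have hS' : ¬ G.ForestColorableOn (n + 2) ↑(S.erase u) := fun h => hS <| by
        rw [← insert_erase hu]
        exact h.insert ((card_le_card (inter_subset_inter_left (erase_subset u S))).trans_lt hdeg)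
      have := ihS _ (erase_ssubset hu) hS'
      rw [card_erase_of_mem hu] at this
      omega
    · simp only [not_exists, not_and, not_lt] at hlow
      obtain ⟨v, hv⟩ : S.Nonempty := nonempty_iff_ne_empty.2 fun h =>
        hS (by rw [h, coe_empty]; exact forestColorableOn_empty _)
      obtain ⟨B, hBS, hB, hcard⟩ := exists_isAcyclic_induce_subset_mooreBound_le hG hv hlow
      have hS' : ¬ G.ForestColorableOn (n + 1) ↑(S \ B) := fun h => hS <| by
        simpa only [← coe_union, sdiff_union_of_subset hBS] using h.union hB
      have := ihn _ hS'
      have := (systolicBound_le_mooreBound n m).trans hcard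
      have := card_sdiff_add_card_eq_card hBS
      rw [systolicBound_succ_succ]
      omega

end SimpleGraph

/-- **Discrete systolic inequality for graphs (Theorem of Avvakumov–Balitskiy–Hubard–Karasev
applied to graphs).** If every cycle of a finite simple graph `X` has length at least `g`
(`g ≥ 3`) and the vertex set cannot be partitioned into `n` or fewer sets each inducing a
forest (`n ≥ 1`), then `|V(X)| ≥ C(n+⌊g/2⌋-1, n-1) + 2·C(n+⌊g/2⌋-1, n) - 1`. -/
theorem discrete_systolic_graph {V : Type*} [Fintype V] (X : SimpleGraph V) (g n : ℕ)
    (hg : 3 ≤ g) (hn : 1 ≤ n)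
    (hgirth : ∀ (v : V) (w : X.Walk v v), w.IsCycle → g ≤ w.length)
    (hess : ¬ ∃ f : V → Fin n, ∀ c : Fin n,
        ∀ (v : (f ⁻¹' {c})) (w : (X.induce (f ⁻¹' {c})).Walk v v), ¬ w.IsCycle) :
    (Fintype.card V : ℤ) ≥
      (Nat.choose (n + g / 2 - 1) (n - 1) : ℤ)
        + 2 * (Nat.choose (n + g / 2 - 1) n : ℤ) - 1 := by
  classical
  obtain ⟨m, hm⟩ : ∃ m, g / 2 = m + 1 := ⟨g / 2 - 1, by omega⟩
  obtain ⟨n, rfl⟩ : ∃ n', n = n' + 1 := ⟨n - 1, by omega⟩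
  have hX : (2 * m + 2 : ℕ∞) ≤ X.egirth := SimpleGraph.le_egirth.2 fun v w hw =>
    le_trans (by norm_cast; omega) (Nat.cast_le.2 (hgirth v w hw))
  have hess' : ¬ X.ForestColorableOn (n + 1) (univ : Finset V) := fun ⟨f, hf⟩ =>
    hess ⟨f, fun c => by rw [← Set.univ_inter (f ⁻¹' {c}), ← Finset.coe_univ]; exact hf c⟩
  have := X.systolicBound_le_card_add_one hX n univ hess'
  rw [card_univ, systolicBound] at this
  rw [hm, show n + 1 + (m + 1) - 1 = n + (m + 1) by omega, Nat.add_sub_cancel]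
  omega
end
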